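/- arXiv:2107.11341 — 3 statements merged into one kernel-verified Lean document; each statement's English description precedes it below -/
import Mathlib

section
/- Let τ > 0 and a₀, a₁, b₀, s₀ be real numbers, and let Δ(s) = s² + a₁ s + a₀ + b₀ e^{−sτ}. Then s₀ is a root of Δ of multiplicity at least 3 (i.e., Δ(s₀) = Δ′(s₀) = Δ″(s₀) = 0) if and only if a₁ = −2s₀ − 2/τ, a₀ = s₀² + 2s₀/τ + 2/τ², and b₀ = −(2/τ²) e^{s₀τ}; moreover, in this case the multiplicity is exactly 3, i.e., Δ‴(s₀) ≠ 0. -/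
/-!
Differentiating, `Δ'(s) = 2s + a₁ - τ b₀e^{-sτ}`, `Δ''(s) = 2 + τ² b₀e^{-sτ}` and
`Δ'''(s) = -τ³ b₀e^{-sτ}`. With `x = b₀e^{-s₀τ}`, the conditions `Δ(s₀) = Δ'(s₀) = Δ''(s₀) = 0`
form a triangular linear system in `(a₀, a₁, x)`, which is solved uniquely from the bottom up;
then `Δ'''(s₀) = -τ (τ² x) = 2τ ≠ 0`.
-/

open Complex

theorem Nat.forall_le_two_iff {P : ℕ → Prop} : (∀ k ≤ 2, P k) ↔ P 0 ∧ P 1 ∧ P 2 := by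
  simp only [Nat.le_succ_iff, Nat.le_zero, or_imp, forall_and, forall_eq]
  tauto

theorem triple_root_system_iff {K : Type*} [Field K] {τ s a₀ a₁ x : K} (hτ : τ ≠ 0) :
    (s ^ 2 + a₁ * s + a₀ + x = 0 ∧ 2 * s + a₁ - τ * x = 0 ∧ 2 + τ ^ 2 * x = 0) ↔
      a₁ = -2 * s - 2 / τ ∧ a₀ = s ^ 2 + 2 * s / τ + 2 / τ ^ 2 ∧ x = -(2 / τ ^ 2) := by
  constructor
  · rintro ⟨h0, h1, h2⟩
    have hx : x = -(2 / τ ^ 2) := by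
      field_simp
      linear_combination h2
    have ha₁ : a₁ = -2 * s - 2 / τ := by
      rw [hx] at h1
      field_simp at h1 ⊢
      linear_combination h1
    refine ⟨ha₁, ?_, hx⟩
    rw [hx, ha₁] at h0
    field_simp at h0 ⊢
    linear_combination h0
  · rintro ⟨rfl, rfl, rfl⟩
    refine ⟨?_, ?_, ?_⟩ <;> field_simp <;> ring

theorem Real.mul_exp_neg_eq_iff {b c y : ℝ} : b * Real.exp (-y) = c ↔ b = c * Real.exp y := by
  rw [Real.exp_neg, ← div_eq_mul_inv, div_eq_iff (Real.exp_pos y).ne']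

theorem hasDerivAt_cexp_neg_mul (τ s : ℂ) :
    HasDerivAt (fun s => exp (-s * τ)) (-τ * exp (-s * τ)) s := by
  simpa [mul_comm] using ((hasDerivAt_neg s).mul_const τ).cexp

noncomputable def quasipoly (τ a₀ a₁ b₀ : ℂ) : ℂ → ℂ := fun s =>
  s ^ 2 + a₁ * s + a₀ + b₀ * exp (-s * τ)

section Derivatives

variable (τ a₀ a₁ b₀ : ℂ)

theorem deriv_quasipoly :
    deriv (quasipoly τ a₀ a₁ b₀) = fun s => 2 * s + a₁ - τ * (b₀ * exp (-s * τ)) := by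
  funext s
  refine HasDerivAt.deriv ?_
  refine (((hasDerivAt_pow 2 s).add ((hasDerivAt_id s).const_mul a₁)).add_const a₀ |>.add
    ((hasDerivAt_cexp_neg_mul τ s).const_mul b₀)).congr_deriv ?_
  ring

theorem iteratedDeriv_two_quasipoly :
    iteratedDeriv 2 (quasipoly τ a₀ a₁ b₀) = fun s => 2 + τ ^ 2 * (b₀ * exp (-s * τ)) := by
  rw [iteratedDeriv_succ, iteratedDeriv_one, deriv_quasipoly]
  funext s
  refine HasDerivAt.deriv ?_
  refine ((((hasDerivAt_id s).const_mul 2).add_const a₁).sub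
    (((hasDerivAt_cexp_neg_mul τ s).const_mul b₀).const_mul τ)).congr_deriv ?_
  ring

theorem iteratedDeriv_three_quasipoly :
    iteratedDeriv 3 (quasipoly τ a₀ a₁ b₀) = fun s => -τ ^ 3 * (b₀ * exp (-s * τ)) := by
  rw [iteratedDeriv_succ, iteratedDeriv_two_quasipoly]
  funext s
  refine HasDerivAt.deriv ?_
  refine ((((hasDerivAt_cexp_neg_mul τ s).const_mul b₀).const_mul (τ ^ 2)).const_add 2
    ).congr_deriv ?_
  ring

end Derivatives

section Roots

variable {τ a₀ a₁ b₀ s : ℂ}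

theorem quasipoly_triple_root_iff (hτ : τ ≠ 0) :
    (∀ k ≤ 2, iteratedDeriv k (quasipoly τ a₀ a₁ b₀) s = 0) ↔
      a₁ = -2 * s - 2 / τ ∧ a₀ = s ^ 2 + 2 * s / τ + 2 / τ ^ 2 ∧
        b₀ * exp (-s * τ) = -(2 / τ ^ 2) := by
  rw [Nat.forall_le_two_iff, iteratedDeriv_zero, iteratedDeriv_one, deriv_quasipoly,
    iteratedDeriv_two_quasipoly]
  exact triple_root_system_iff hτ

theorem iteratedDeriv_three_quasipoly_ne_zero (hτ : τ ≠ 0)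
    (h : iteratedDeriv 2 (quasipoly τ a₀ a₁ b₀) s = 0) :
    iteratedDeriv 3 (quasipoly τ a₀ a₁ b₀) s ≠ 0 := by
  rw [iteratedDeriv_two_quasipoly] at h
  rw [iteratedDeriv_three_quasipoly]
  beta_reduce at h ⊢
  rw [show -τ ^ 3 * (b₀ * exp (-s * τ)) = 2 * τ by
    linear_combination (-τ) * h]
  exact mul_ne_zero two_ne_zero hτ

end Roots

/-- For `Δ(s) = s² + a₁ s + a₀ + b₀ e^{-sτ}` with `τ > 0`, a real `s₀` is a root
of multiplicity at least `3` iff `a₁ = -2s₀ - 2/τ`, `a₀ = s₀² + 2s₀/τ + 2/τ²`,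
and `b₀ = -(2/τ²) e^{s₀ τ}`; moreover, in that case `Δ'''(s₀) ≠ 0`, so the
multiplicity is exactly `3`. -/
theorem mid_characterization_n2_m0 (τ a₀ a₁ b₀ s₀ : ℝ) (hτ : 0 < τ) :
    ((∀ k ≤ 2,
        iteratedDeriv k
          (fun s : ℂ => s ^ 2 + (a₁ : ℂ) * s + (a₀ : ℂ) +
            (b₀ : ℂ) * Complex.exp (-s * τ)) (s₀ : ℂ) = 0) ↔
      (a₁ = -2 * s₀ - 2 / τ ∧ a₀ = s₀ ^ 2 + 2 * s₀ / τ + 2 / τ ^ 2 ∧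
        b₀ = -(2 / τ ^ 2) * Real.exp (s₀ * τ))) ∧
    ((∀ k ≤ 2,
        iteratedDeriv k
          (fun s : ℂ => s ^ 2 + (a₁ : ℂ) * s + (a₀ : ℂ) +
            (b₀ : ℂ) * Complex.exp (-s * τ)) (s₀ : ℂ) = 0) →
      iteratedDeriv 3
        (fun s : ℂ => s ^ 2 + (a₁ : ℂ) * s + (a₀ : ℂ) +
          (b₀ : ℂ) * Complex.exp (-s * τ)) (s₀ : ℂ) ≠ 0) := by
  have hτ₀ : (τ : ℂ) ≠ 0 := ofReal_ne_zero.mpr hτ.ne'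
  change ((∀ k ≤ 2, iteratedDeriv k (quasipoly τ a₀ a₁ b₀) s₀ = 0) ↔ _) ∧
    ((∀ k ≤ 2, iteratedDeriv k (quasipoly τ a₀ a₁ b₀) s₀ = 0) →
      iteratedDeriv 3 (quasipoly τ a₀ a₁ b₀) s₀ ≠ 0)
  refine ⟨?_, fun h => iteratedDeriv_three_quasipoly_ne_zero hτ₀ (h 2 le_rfl)⟩
  rw [quasipoly_triple_root_iff hτ₀, ← Real.mul_exp_neg_eq_iff, ← neg_mul]
  norm_cast
end

section
/- Let τ > 0 and a₀, b₀ be real numbers, and let Δ(s) = s + a₀ + b₀ e^{−sτ}. If s₁ and s₂ are real numbers with s₁ > s₂ and Δ(s₁) = Δ(s₂) = 0, then s₁ is a dominant root of Δ: every complex root s of Δ satisfies Re s ≤ s₁. -/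
/-!
Subtracting the equations `Δ(s) = 0` and `Δ(s₁) = 0` gives
`s - s₁ = b₀ e^{-s₁τ} (1 - e^{-(s - s₁)τ})`, and `|1 - e^{-w}| ≤ |w|` when `Re w ≥ 0`, so a root
`s ≠ s₁` with `Re s ≥ s₁` forces `|b₀| τ e^{-s₁τ} ≥ 1`. The second real root `s₂ < s₁` rules this
out: by strict convexity of `exp`, `s₁ - s₂ = b₀ (e^{-s₂τ} - e^{-s₁τ}) > b₀ τ e^{-s₁τ} (s₁ - s₂)`.
-/

open Complex

noncomputable def charQuasipoly (τ a₀ b₀ : ℝ) (s : ℂ) : ℂ :=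
  s + a₀ + b₀ * exp (-s * τ)

theorem Complex.norm_exp_sub_one_le_of_re_nonpos {z : ℂ} (hz : z.re ≤ 0) : ‖exp z - 1‖ ≤ ‖z‖ := by
  have hlip := (convex_halfSpace_re_le (0 : ℝ)).norm_image_sub_le_of_norm_deriv_le
    (f := exp) (C := 1) (fun x _ ↦ differentiableAt_exp)
    (fun x (hx : x.re ≤ 0) ↦ by simpa [Complex.norm_exp] using hx)
    (show (0 : ℂ).re ≤ 0 by simp) hz
  simpa using hlip

theorem charQuasipoly_ofReal (τ a₀ b₀ x : ℝ) :
    charQuasipoly τ a₀ b₀ x = ((x + a₀ + b₀ * Real.exp (-(x * τ)) : ℝ) : ℂ) := by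
  simp [charQuasipoly, neg_mul]

section Roots

variable {τ a₀ b₀ : ℝ}

theorem norm_sub_le_of_charQuasipoly_eq_zero (hτ : 0 ≤ τ) {z s : ℂ}
    (hz : charQuasipoly τ a₀ b₀ z = 0) (hs : charQuasipoly τ a₀ b₀ s = 0) (hre : z.re ≤ s.re) :
    ‖s - z‖ ≤ |b₀| * τ * Real.exp (-(z.re * τ)) * ‖s - z‖ := by
  have hdiff : s - z = -(b₀ * exp (-z * τ)) * (exp (-(s - z) * τ) - 1) := by
    have hsplit : exp (-s * τ) = exp (-z * τ) * exp (-(s - z) * τ) := by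
      rw [← Complex.exp_add]; ring_nf
    unfold charQuasipoly at hz hs
    linear_combination hs - hz - b₀ * hsplit
  have hexp : ‖exp (-(s - z) * τ) - 1‖ ≤ ‖s - z‖ * τ := by
    have hnonpos : (-(s - z) * τ).re ≤ 0 := by
      simp only [Complex.mul_re, Complex.neg_re, Complex.sub_re, Complex.ofReal_re,
        Complex.neg_im, Complex.sub_im, Complex.ofReal_im, mul_zero, sub_zero]
      nlinarith
    calc ‖exp (-(s - z) * τ) - 1‖ ≤ ‖-(s - z) * τ‖ := norm_exp_sub_one_le_of_re_nonpos hnonpos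
      _ = ‖s - z‖ * τ := by rw [norm_mul, norm_neg, Complex.norm_real, Real.norm_of_nonneg hτ]
  have hfactor : ‖b₀ * exp (-z * τ)‖ = |b₀| * Real.exp (-(z.re * τ)) := by
    simp [Complex.norm_exp, Complex.mul_re]
  calc ‖s - z‖ = |b₀| * Real.exp (-(z.re * τ)) * ‖exp (-(s - z) * τ) - 1‖ := by
        conv_lhs => rw [hdiff]
        rw [norm_mul, norm_neg, hfactor]
    _ ≤ |b₀| * Real.exp (-(z.re * τ)) * (‖s - z‖ * τ) := by gcongr
    _ = |b₀| * τ * Real.exp (-(z.re * τ)) * ‖s - z‖ := by ring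

theorem eq_of_charQuasipoly_eq_zero_of_re_le (hτ : 0 ≤ τ) {z s : ℂ}
    (hz : charQuasipoly τ a₀ b₀ z = 0) (hs : charQuasipoly τ a₀ b₀ s = 0) (hre : z.re ≤ s.re)
    (hgain : |b₀| * τ * Real.exp (-(z.re * τ)) < 1) : s = z := by
  by_contra hne
  have hpos : 0 < ‖s - z‖ := norm_pos_iff.2 (sub_ne_zero.2 hne)
  have hle := norm_sub_le_of_charQuasipoly_eq_zero hτ hz hs hre
  nlinarith

theorem abs_mul_mul_exp_lt_one_of_two_real_roots (hτ : 0 < τ) {s₁ s₂ : ℝ} (h12 : s₂ < s₁)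
    (h1 : s₁ + a₀ + b₀ * Real.exp (-(s₁ * τ)) = 0) (h2 : s₂ + a₀ + b₀ * Real.exp (-(s₂ * τ)) = 0) :
    |b₀| * τ * Real.exp (-(s₁ * τ)) < 1 := by
  have hgap : 0 < (s₁ - s₂) * τ := mul_pos (sub_pos.2 h12) hτ
  have hconvex : Real.exp (-(s₁ * τ)) * ((s₁ - s₂) * τ) <
      Real.exp (-(s₂ * τ)) - Real.exp (-(s₁ * τ)) := by
    have hsplit : Real.exp (-(s₂ * τ)) = Real.exp (-(s₁ * τ)) * Real.exp ((s₁ - s₂) * τ) := by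
      rw [← Real.exp_add]; ring_nf
    have := Real.add_one_lt_exp hgap.ne'
    rw [hsplit]
    nlinarith [Real.exp_pos (-(s₁ * τ))]
  have hroots : s₁ - s₂ = b₀ * (Real.exp (-(s₂ * τ)) - Real.exp (-(s₁ * τ))) := by linarith
  have hdrop : 0 < Real.exp (-(s₂ * τ)) - Real.exp (-(s₁ * τ)) := by
    linarith [mul_pos (Real.exp_pos (-(s₁ * τ))) hgap]
  have hb₀ : 0 < b₀ := pos_of_mul_pos_left (hroots ▸ sub_pos.2 h12) hdrop.le
  rw [abs_of_pos hb₀]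
  nlinarith [mul_lt_mul_of_pos_left hconvex hb₀]

end Roots

/-- CRRID property for `n = 1`, `m = 0`: if `s₁ > s₂` are two real roots of
`Δ(s) = s + a₀ + b₀ e^{-sτ}` with `τ > 0`, then `s₁` is dominant: every complex
root `s` of `Δ` satisfies `Re s ≤ s₁`. -/
theorem crrid_dominancy_n1_m0 (τ a₀ b₀ : ℝ) (hτ : 0 < τ) (s₁ s₂ : ℝ)
    (h12 : s₂ < s₁)
    (h1 : (s₁ : ℂ) + (a₀ : ℂ) + (b₀ : ℂ) * Complex.exp (-(s₁ : ℂ) * τ) = 0)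
    (h2 : (s₂ : ℂ) + (a₀ : ℂ) + (b₀ : ℂ) * Complex.exp (-(s₂ : ℂ) * τ) = 0) :
    ∀ s : ℂ, s + (a₀ : ℂ) + (b₀ : ℂ) * Complex.exp (-s * τ) = 0 → s.re ≤ s₁ := by
  intro s hs
  have hreal₁ : s₁ + a₀ + b₀ * Real.exp (-(s₁ * τ)) = 0 := by
    exact_mod_cast (charQuasipoly_ofReal τ a₀ b₀ s₁).symm.trans h1
  have hreal₂ : s₂ + a₀ + b₀ * Real.exp (-(s₂ * τ)) = 0 := by
    exact_mod_cast (charQuasipoly_ofReal τ a₀ b₀ s₂).symm.trans h2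
  have hgain := abs_mul_mul_exp_lt_one_of_two_real_roots hτ h12 hreal₁ hreal₂
  by_contra! hlt
  have hre : (s₁ : ℂ).re ≤ s.re := by simpa using hlt.le
  have hs₁ := eq_of_charQuasipoly_eq_zero_of_re_le hτ.le h1 hs hre (by simpa using hgain)
  simp [hs₁] at hlt
end

section
/- Let n ≥ 1 and 0 ≤ m ≤ n be integers, τ > 0 a real number, a₀,…,a_{n−1} fixed real coefficients, and s₀ a real number. Then there exists a unique tuple of real numbers (b₀,…,b_m) such that the quasipolynomial Δ(s) = s^n + Σ_{k=0}^{n−1} a_k s^k + e^{−sτ} Σ_{k=0}^{m} b_k s^k satisfies Δ^{(k)}(s₀) = 0 for all 0 ≤ k ≤ m; that is, the system of m + 1 equations Δ^{(k)}(s₀) = 0, k = 0,…,m, is linear in the unknowns b₀,…,b_m and admits a unique solution. -/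
/-!
Write `Δ(s) = P(s) + e^{-sτ} Q_b(s)` with `Q_b = ∑ bᵢ Xⁱ`. Then
`Δ^{(k)}(s) = P^{(k)}(s) + e^{-sτ} ((D - τ)^k Q_b)(s)`, so the conditions `Δ^{(k)}(s₀) = 0`,
`k ≤ m`, form a square linear system in `b` whose matrix sends `b` to the values
`((D - τ)^k Q_b)(s₀)`. It is injective: as `D = (D - τ) + τ`, these values vanish for all `k ≤ m`
only if `Q_b^{(k)}(s₀) = 0` for all `k ≤ m`, i.e. `s₀` is a root of `Q_b` of multiplicity
`> m ≥ deg Q_b`, forcing `Q_b = 0`. A square injective system has exactly one solution.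
-/

open Polynomial

theorem Module.End.map_pow_apply_eq_zero_of_forall_sub_smul_pow {R M N : Type*} [CommRing R]
    [AddCommGroup M] [Module R M] [AddCommGroup N] [Module R N]
    (f : Module.End R M) (c : R) (φ : M →ₗ[R] N) {k : ℕ} {x : M}
    (h : ∀ j ≤ k, φ (((f - c • 1) ^ j) x) = 0) : φ ((f ^ k) x) = 0 := by
  induction k generalizing x with
  | zero => simpa using h 0 le_rfl
  | succ k ih =>
    have hfx : f x = (f - c • 1) x + c • x := by simp
    rw [pow_succ, Module.End.mul_apply, hfx, map_add, map_smul, map_add, map_smul,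
      ih fun j hj => by simpa only [pow_succ, Module.End.mul_apply] using h (j + 1) (by omega),
      ih fun j hj => h j (by omega), smul_zero, add_zero]

namespace Polynomial

theorem eq_zero_of_natDegree_le_of_isRoot_iterate_derivative {R : Type*} [CommRing R]
    [IsDomain R] [CharZero R] {p : R[X]} {t : R} {m : ℕ} (hp : p.natDegree ≤ m)
    (h : ∀ k ≤ m, (derivative^[k] p).IsRoot t) : p = 0 := by
  classical
  by_contra hp0
  have hlt := lt_rootMultiplicity_of_isRoot_iterate_derivative hp0 h
  have hle := (count_roots p ▸ Multiset.count_le_card t p.roots).trans (card_roots' p)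
  omega

section Field

variable {K : Type*} [Field K]

theorem coe_degreeLT_basis_equivFun_symm {n : ℕ} (b : Fin n → K) :
    ((degreeLT.basis K n).equivFun.symm b : K[X]) = ∑ i, b i • X ^ (i : ℕ) := by
  simp [Module.Basis.equivFun_symm_apply]

theorem natDegree_le_of_mem_degreeLT_succ {m : ℕ} {p : K[X]} (hp : p ∈ degreeLT K (m + 1)) :
    p.natDegree ≤ m := by
  rw [mem_degreeLT] at hp
  exact natDegree_le_iff_degree_le.mpr (by exact_mod_cast Order.le_of_lt_succ hp)

/-- `twistedDerivative τ Q` is the polynomial factor of `d/ds (e^{-τ s} Q(s))`. -/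
noncomputable def twistedDerivative (τ : K) : Module.End K K[X] :=
  derivative - τ • 1

noncomputable def twistedDerivativeValues (τ s₀ : K) (m : ℕ) :
    (Fin (m + 1) → K) →ₗ[K] Fin (m + 1) → K :=
  LinearMap.pi fun k => leval s₀ ∘ₗ (twistedDerivative τ ^ (k : ℕ)) ∘ₗ
    (degreeLT K (m + 1)).subtype ∘ₗ (degreeLT.basis K (m + 1)).equivFun.symm.toLinearMap

theorem twistedDerivativeValues_apply (τ s₀ : K) (m : ℕ) (b : Fin (m + 1) → K)
    (k : Fin (m + 1)) :
    twistedDerivativeValues τ s₀ m b k =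
      ((twistedDerivative τ ^ (k : ℕ)) (∑ i, b i • X ^ (i : ℕ))).eval s₀ := by
  rw [← coe_degreeLT_basis_equivFun_symm]
  rfl

theorem twistedDerivativeValues_bijective [CharZero K] (τ s₀ : K) (m : ℕ) :
    Function.Bijective (twistedDerivativeValues τ s₀ m) := by
  suffices hinj : Function.Injective (twistedDerivativeValues τ s₀ m) from
    ⟨hinj, LinearMap.injective_iff_surjective.mp hinj⟩
  rw [injective_iff_map_eq_zero]
  intro b hb
  set Q := (degreeLT.basis K (m + 1)).equivFun.symm b
  have hQ : (Q : K[X]) = 0 := by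
    refine eq_zero_of_natDegree_le_of_isRoot_iterate_derivative (t := s₀)
      (natDegree_le_of_mem_degreeLT_succ Q.2) fun k hk => ?_
    rw [IsRoot.def, ← Module.End.pow_apply, ← leval_apply]
    refine Module.End.map_pow_apply_eq_zero_of_forall_sub_smul_pow _ τ _ fun j hj => ?_
    have hj := congrFun hb ⟨j, by omega⟩
    rwa [twistedDerivativeValues_apply, ← coe_degreeLT_basis_equivFun_symm] at hj
  exact (degreeLT.basis K (m + 1)).equivFun.symm.map_eq_zero_iff.mp (Submodule.coe_eq_zero.mp hQ)

end Field

end Polynomial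

theorem iteratedDeriv_aeval_add_exp_mul_aeval (P Q : ℝ[X]) (τ : ℝ) (k : ℕ) :
    iteratedDeriv k (fun s : ℂ => aeval s P + Complex.exp (-s * τ) * aeval s Q) =
      fun s => aeval s ((derivative ^ k : Module.End ℝ ℝ[X]) P) +
        Complex.exp (-s * τ) * aeval s ((twistedDerivative τ ^ k) Q) := by
  induction k with
  | zero => simp
  | succ k ih =>
    rw [iteratedDeriv_succ, ih]
    funext s
    have hexp : HasDerivAt (fun s : ℂ => Complex.exp (-s * τ))
        (Complex.exp (-s * τ) * (-τ)) s := by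
      simpa using ((hasDerivAt_id s).neg.mul_const (τ : ℂ)).cexp
    refine ((Polynomial.hasDerivAt_aeval _ s).add
      (hexp.mul (Polynomial.hasDerivAt_aeval _ s))).deriv.trans ?_
    simp only [twistedDerivative, pow_succ', Module.End.mul_apply, LinearMap.sub_apply,
      LinearMap.smul_apply, Module.End.one_apply, map_sub, map_smul, Complex.real_smul]
    ring

theorem existsUnique_iteratedDeriv_aeval_add_exp_mul_aeval_eq_zero (P : ℝ[X]) (τ s₀ : ℝ)
    (m : ℕ) :
    ∃! b : Fin (m + 1) → ℝ, ∀ k ≤ m,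
      iteratedDeriv k (fun s : ℂ => aeval s P +
        Complex.exp (-s * τ) * aeval s (∑ i, b i • X ^ (i : ℕ) : ℝ[X])) s₀ = 0 := by
  set E := Real.exp (-(s₀ * τ))
  have hE : E ≠ 0 := (Real.exp_pos _).ne'
  set w : Fin (m + 1) → ℝ := fun k => -((derivative ^ (k : ℕ) : Module.End ℝ ℝ[X]) P).eval s₀ / E
  have hcond : ∀ b : Fin (m + 1) → ℝ, (∀ k ≤ m,
      iteratedDeriv k (fun s : ℂ => aeval s P +
        Complex.exp (-s * τ) * aeval s (∑ i, b i • X ^ (i : ℕ) : ℝ[X])) s₀ = 0) ↔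
      twistedDerivativeValues τ s₀ m b = w := by
    intro b
    simp only [funext_iff, Fin.forall_iff, Nat.lt_succ_iff, iteratedDeriv_aeval_add_exp_mul_aeval,
      twistedDerivativeValues_apply, w]
    refine forall_congr' fun k => imp_congr_right fun _ => ?_
    have hexp : Complex.exp (-s₀ * τ) = E := by simp [E, Complex.ofReal_exp]
    have heval (p : ℝ[X]) : aeval (s₀ : ℂ) p = p.eval s₀ := aeval_ofReal p s₀
    rw [heval, heval, hexp, ← Complex.ofReal_mul, ← Complex.ofReal_add, Complex.ofReal_eq_zero,
      eq_div_iff hE]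
    constructor <;> intro h <;> linarith
  simpa only [hcond] using (twistedDerivativeValues_bijective τ s₀ m).existsUnique w

theorem exists_unique_b_multiplicity_general (n m : ℕ) (τ : ℝ) (a : Fin n → ℝ) (s₀ : ℝ) :
    ∃! b : Fin (m + 1) → ℝ, ∀ k ≤ m,
      iteratedDeriv k
        (fun s : ℂ => s ^ n + (∑ k : Fin n, (a k : ℂ) * s ^ (k : ℕ)) +
          Complex.exp (-s * τ) * ∑ k : Fin (m + 1), (b k : ℂ) * s ^ (k : ℕ))
        (s₀ : ℂ) = 0 := by
  convert existsUnique_iteratedDeriv_aeval_add_exp_mul_aeval_eq_zero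
    (X ^ n + ∑ k, a k • X ^ (k : ℕ)) τ s₀ m using 6
  simp [Complex.real_smul]

/-- Control-oriented setting: for fixed `a₀, …, a_{n-1}`, `τ > 0`, and
`s₀ ∈ ℝ`, there is a unique tuple `(b₀, …, b_m)` of real numbers such that
`Δ(s) = s^n + Σ_{k<n} a_k s^k + e^{-sτ} Σ_{k≤m} b_k s^k` satisfies
`Δ^{(k)}(s₀) = 0` for all `0 ≤ k ≤ m`. -/
theorem exists_unique_b_multiplicity (n m : ℕ) (hn : 1 ≤ n) (hm : m ≤ n)
    (τ : ℝ) (hτ : 0 < τ) (a : Fin n → ℝ) (s₀ : ℝ) :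
    ∃! b : Fin (m + 1) → ℝ, ∀ k ≤ m,
      iteratedDeriv k
        (fun s : ℂ => s ^ n + (∑ k : Fin n, (a k : ℂ) * s ^ (k : ℕ)) +
          Complex.exp (-s * τ) * ∑ k : Fin (m + 1), (b k : ℂ) * s ^ (k : ℕ))
        (s₀ : ℂ) = 0 :=
  exists_unique_b_multiplicity_general n m τ a s₀
end
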